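/- Assume that neither 1 nor −1 is an eigenvalue of the self-adjoint operator T'_M = d_{T,M} d_{O,M}*. Then the ranges of the adjoint boundary operators intersect trivially: d_{T,M}*(ℓ²(V')) ∩ d_{O,M}*(ℓ²(V')) = {0}. -/

import Mathlib

/- Setting: G' = (V', A') a connected locally finite graph, arcs = darts of a simple
graph `G`; `e.fst` = origin, `e.snd` = terminus, `e.symm` = reversed arc; `α` a weight
on arcs with `Σ_{a : o(a)=v} |α(a)|² = 1`, and `M` a set of marked vertices. ℓ²(A')
and ℓ²(V') are the `lp _ 2` spaces; the marked boundary operators and the shift are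
characterized by their pointwise formulas. -/

noncomputable section
open scoped ComplexConjugate ComplexInnerProductSpace Classical
open Complex Filter Topology ContinuousLinearMap

namespace GroverStmtB

/-- ℓ²(V') -/
abbrev lV (V : Type) : Type := lp (fun _ : V => ℂ) 2

variable {V : Type} (G : SimpleGraph V)

instance instCFCRealLV : ContinuousFunctionalCalculus ℝ (lV V →L[ℂ] lV V) IsSelfAdjoint :=
  IsSelfAdjoint.instContinuousFunctionalCalculus

/-- ℓ²(A') where A' is the set of symmetric arcs (darts) of `G`. -/
abbrev lA : Type := lp (fun _ : G.Dart => ℂ) 2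

/-- the weight condition `Σ_{a : o(a)=v} |α(a)|² = 1` for every vertex `v`. -/
def IsWeight (α : G.Dart → ℂ) : Prop :=
  ∀ v : V, ∑' a : {a : G.Dart // a.fst = v}, ‖α a.1‖ ^ 2 = 1

/-- `(S'ψ)(e) = ψ(ē)` -/
def IsShift (S : lA G →L[ℂ] lA G) : Prop :=
  ∀ (ψ : lA G) (e : G.Dart), S ψ e = ψ e.symm

variable (α : G.Dart → ℂ) (M : Set V)

/-- `(d_{T,M}ψ)(v) = Σ_{e : t(e)=v} α(ē)ψ(e)` for `v ∉ M`, `= 0` for `v ∈ M`. -/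
def IsMarkedT (dTM : lA G →L[ℂ] lV V) : Prop :=
  (∀ (ψ : lA G) (v : V), v ∉ M →
      dTM ψ v = ∑' e : {e : G.Dart // e.snd = v}, α e.1.symm * ψ e.1) ∧
  (∀ (ψ : lA G) (v : V), v ∈ M → dTM ψ v = 0)

/-- `(d_{O,M}ψ)(v) = Σ_{e : o(e)=v} α(e)ψ(e)` for `v ∉ M`, `= 0` for `v ∈ M`. -/
def IsMarkedO (dOM : lA G →L[ℂ] lV V) : Prop :=
  (∀ (ψ : lA G) (v : V), v ∉ M →
      dOM ψ v = ∑' e : {e : G.Dart // e.fst = v}, α e.1 * ψ e.1) ∧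
  (∀ (ψ : lA G) (v : V), v ∈ M → dOM ψ v = 0)

/-- the Dirichlet transition operator `T'_M = d_{T,M} d_{O,M}*`. -/
def TM (dTM dOM : lA G →L[ℂ] lV V) : lV V →L[ℂ] lV V := dTM ∘L adjoint dOM

/-- `exp(s·i·arccos(T'_M))` via the continuous functional calculus for `T'_M`. -/
def expArc (dTM dOM : lA G →L[ℂ] lV V) (s : ℂ) : lV V →L[ℂ] lV V :=
  NormedSpace.exp ((s * Complex.I) • cfc Real.arccos (TM G dTM dOM))

/-- `(2(1 − T'_M²))^(−1/2)` via the continuous functional calculus for `T'_M`. -/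
def invSqrt (dTM dOM : lA G →L[ℂ] lV V) : lV V →L[ℂ] lV V :=
  cfc (fun x : ℝ => (Real.sqrt (2 * (1 - x ^ 2)))⁻¹) (TM G dTM dOM)

/-- `d_{±,M}* = (d_{T,M}* − d_{O,M}*·exp(±i·arccos T'_M))·(2(1−T'_M²))^(−1/2)`,
with `s = 1` for the `+` sign and `s = −1` for the `−` sign. -/
def dpmStar (dTM dOM : lA G →L[ℂ] lV V) (s : ℂ) : lV V →L[ℂ] lA G :=
  (adjoint dTM - adjoint dOM ∘L expArc G dTM dOM s) ∘L invSqrt G dTM dOM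

/-- the quantum walk `U'_M = S'(2 d_{T,M}* d_{T,M} − 1)` induced by the Dirichlet
random walk. -/
def UM (S : lA G →L[ℂ] lA G) (dTM : lA G →L[ℂ] lV V) : lA G →L[ℂ] lA G :=
  S ∘L ((2 : ℂ) • ((adjoint dTM) ∘L dTM) - 1)
end GroverStmtB

/-!
Both boundary operators are partial isometries: `d d*` is the projection onto `ℓ²(V' ∖ M)`,
which `d*` does not see, so `d* d` fixes the range of `d*`. For `ψ` in both ranges, the identity
`T'_M = d_{T,M} d_{O,M}* = d_{O,M} d_{T,M}*` shows that `T'_M` swaps `f = d_{T,M} ψ` and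
`g = d_{O,M} ψ`. Then `f + g` is fixed by `T'_M`, hence zero, so `T'_M f = -f`, hence `f = 0`
and `ψ = d_{T,M}* f = 0`.
-/

namespace Module.End

variable {R E : Type*} [CommRing R] [AddCommGroup E] [Module R E]

theorem eq_zero_of_apply_eq_smul {T : Module.End R E} {μ : R} (hμ : ¬ T.HasEigenvalue μ)
    {x : E} (hx : T x = μ • x) : x = 0 :=
  Classical.byContradiction fun hne =>
    hμ (hasEigenvalue_of_hasEigenvector ⟨mem_eigenspace_iff.mpr hx, hne⟩)

theorem eq_zero_of_apply_eq_of_apply_eq {T : Module.End R E}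
    (h₁ : ¬ T.HasEigenvalue 1) (h₂ : ¬ T.HasEigenvalue (-1))
    {f g : E} (hf : T f = g) (hg : T g = f) : f = 0 := by
  have hsum : f + g = 0 :=
    eq_zero_of_apply_eq_smul h₁ (by rw [map_add, hf, hg, one_smul, add_comm])
  have hg' : g = -f := eq_neg_of_add_eq_zero_right hsum
  exact eq_zero_of_apply_eq_smul h₂ (by rw [hf, hg', neg_one_smul])

end Module.End

namespace LinearMap

variable {R E F : Type*} [CommRing R] [AddCommGroup E] [Module R E] [AddCommGroup F] [Module R F]

theorem range_inf_range_eq_bot_of_not_hasEigenvalue {A B : E →ₗ[R] F} {A' B' : F →ₗ[R] E}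
    (hA : A' ∘ₗ A ∘ₗ A' = A') (hB : B' ∘ₗ B ∘ₗ B' = B') (hswap : B ∘ₗ A' = A ∘ₗ B')
    (h₁ : ¬ Module.End.HasEigenvalue (A ∘ₗ B') 1)
    (h₂ : ¬ Module.End.HasEigenvalue (A ∘ₗ B') (-1)) :
    range A' ⊓ range B' = ⊥ := by
  refine eq_bot_iff.mpr fun ψ hψ => (Submodule.mem_bot R).mpr ?_
  obtain ⟨⟨x, rfl⟩, y, hy⟩ := Submodule.mem_inf.mp hψ
  have hAψ : A' (A (A' x)) = A' x := LinearMap.congr_fun hA x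
  have hBψ : B' (B (A' x)) = A' x := by rw [← hy]; exact LinearMap.congr_fun hB y
  have hf : (A ∘ₗ B') (A (A' x)) = B (A' x) := by
    rw [← hswap, LinearMap.comp_apply, hAψ]
  have hg : (A ∘ₗ B') (B (A' x)) = A (A' x) := by
    rw [LinearMap.comp_apply, hBψ]
  rw [← hAψ, Module.End.eq_zero_of_apply_eq_of_apply_eq h₁ h₂ hf hg, map_zero]

end LinearMap

namespace GroverStmtB

section MarkedBoundary

variable {ι κ : Type*} (p : ι → κ) (β : ι → ℂ) (M : Set κ)

/-- Both `d_{T,M}` (with `p = t`, `β = α ∘ reverse`) and `d_{O,M}` (with `p = o`, `β = α`)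
sum `β e ψ(e)` over the fibre `p⁻¹ v` off `M`. -/
def IsMarkedBoundary (d : lp (fun _ : ι => ℂ) 2 →L[ℂ] lp (fun _ : κ => ℂ) 2) : Prop :=
  (∀ ψ v, v ∉ M → d ψ v = ∑' e : {e // p e = v}, β e * ψ e) ∧ (∀ ψ v, v ∈ M → d ψ v = 0)

variable {p β M} {d : lp (fun _ : ι => ℂ) 2 →L[ℂ] lp (fun _ : κ => ℂ) 2}

theorem IsMarkedBoundary.apply_single (hd : IsMarkedBoundary p β M d) (e : ι) (v : κ) :
    d (lp.single 2 e 1) v = if p e = v ∧ v ∉ M then β e else 0 := by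
  by_cases hv : v ∈ M
  · simp [hd.2 _ _ hv, hv]
  rw [hd.1 _ _ hv]
  by_cases hev : p e = v
  · rw [tsum_eq_single ⟨e, hev⟩ fun e' he' => by
      rw [lp.single_apply_ne 2 e _ fun h => he' (Subtype.ext h), mul_zero]]
    simp [hev, hv]
  · rw [if_neg fun h => hev h.1]
    refine (tsum_congr fun e' => ?_).trans tsum_zero
    rw [lp.single_apply_ne 2 e _ fun h => hev (h ▸ e'.2), mul_zero]

theorem IsMarkedBoundary.adjoint_apply (hd : IsMarkedBoundary p β M d)
    (f : lp (fun _ : κ => ℂ) 2) (e : ι) :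
    adjoint d f e = if p e ∈ M then 0 else conj (β e) * f (p e) := by
  have hcoord : adjoint d f e = ⟪lp.single 2 e (1 : ℂ), adjoint d f⟫ := by
    simp [lp.inner_single_left, RCLike.inner_apply]
  rw [hcoord, adjoint_inner_right, lp.inner_eq_tsum, tsum_eq_single (p e) fun v hv => by
    simp [hd.apply_single, Ne.symm hv]]
  by_cases h : p e ∈ M <;> simp [hd.apply_single, h, RCLike.inner_apply, mul_comm]

theorem IsMarkedBoundary.apply_adjoint (hd : IsMarkedBoundary p β M d)
    (hβ : ∀ v, ∑' e : {e // p e = v}, ‖β e‖ ^ 2 = 1) (f : lp (fun _ : κ => ℂ) 2) (v : κ) :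
    d (adjoint d f) v = if v ∈ M then 0 else f v := by
  by_cases hv : v ∈ M
  · rw [hd.2 _ _ hv, if_pos hv]
  have hterm : ∀ e : {e // p e = v}, β e * adjoint d f e = (‖β e‖ ^ 2 : ℝ) * f v := by
    intro e
    rw [hd.adjoint_apply, e.2, if_neg hv, ← mul_assoc, Complex.mul_conj']
    push_cast
    rfl
  rw [hd.1 _ _ hv, tsum_congr hterm, tsum_mul_right, ← Complex.ofReal_tsum, hβ, if_neg hv,
    Complex.ofReal_one, one_mul]

theorem IsMarkedBoundary.adjoint_comp_self_comp_adjoint (hd : IsMarkedBoundary p β M d)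
    (hβ : ∀ v, ∑' e : {e // p e = v}, ‖β e‖ ^ 2 = 1) :
    adjoint d ∘L d ∘L adjoint d = adjoint d := by
  ext f e
  simp only [comp_apply, hd.adjoint_apply, hd.apply_adjoint hβ]
  split_ifs <;> rfl

end MarkedBoundary

variable {V : Type} {G : SimpleGraph V} {α : G.Dart → ℂ} {M : Set V}

theorem IsMarkedT.isMarkedBoundary {dTM : lA G →L[ℂ] lV V} (hdTM : IsMarkedT G α M dTM) :
    IsMarkedBoundary (fun e : G.Dart => e.snd) (fun e => α e.symm) M dTM :=
  hdTM

theorem IsMarkedO.isMarkedBoundary {dOM : lA G →L[ℂ] lV V} (hdOM : IsMarkedO G α M dOM) :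
    IsMarkedBoundary (fun e : G.Dart => e.fst) α M dOM :=
  hdOM

def dartSymmFiber (v : V) : {e : G.Dart // e.snd = v} ≃ {e : G.Dart // e.fst = v} :=
  (SimpleGraph.Dart.symm_involutive.toPerm _).subtypeEquiv fun _ => Iff.rfl

theorem IsWeight.tsum_snd (hα : IsWeight G α) (v : V) :
    ∑' e : {e : G.Dart // e.snd = v}, ‖α e.1.symm‖ ^ 2 = 1 := by
  rw [← hα v]
  exact (dartSymmFiber v).tsum_eq fun a => ‖α a.1‖ ^ 2

theorem IsMarkedO.comp_adjoint_eq_comp_adjoint {dTM dOM : lA G →L[ℂ] lV V}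
    (hdOM : IsMarkedO G α M dOM) (hdTM : IsMarkedT G α M dTM) :
    dOM ∘L adjoint dTM = dTM ∘L adjoint dOM := by
  ext f v
  by_cases hv : v ∈ M
  · simp [hdOM.2 _ _ hv, hdTM.2 _ _ hv]
  simp only [comp_apply, hdOM.1 _ _ hv, hdTM.1 _ _ hv, hdTM.isMarkedBoundary.adjoint_apply,
    hdOM.isMarkedBoundary.adjoint_apply]
  refine ((dartSymmFiber v).tsum_eq _).symm.trans (tsum_congr fun e => ?_)
  rw [show (dartSymmFiber v e : G.Dart) = e.1.symm from rfl, SimpleGraph.Dart.symm_symm]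
  rfl

/-- if neither `1` nor `−1` is an eigenvalue of `T'_M = d_{T,M} d_{O,M}*`,
then `d_{T,M}*(ℓ²(V')) ∩ d_{O,M}*(ℓ²(V')) = {0}`. -/
theorem statement12 {V : Type} (G : SimpleGraph V)
    [∀ v : V, Fintype (G.neighborSet v)] (hconn : G.Connected)
    (α : G.Dart → ℂ) (M : Set V) (hα : IsWeight G α)
    (dTM dOM : lA G →L[ℂ] lV V)
    (hdTM : IsMarkedT G α M dTM) (hdOM : IsMarkedO G α M dOM)
    (h₁ : ¬ Module.End.HasEigenvalue (TM G dTM dOM).toLinearMap 1)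
    (h₂ : ¬ Module.End.HasEigenvalue (TM G dTM dOM).toLinearMap (-1)) :
    LinearMap.range (adjoint dTM).toLinearMap ⊓ LinearMap.range (adjoint dOM).toLinearMap = ⊥ := by
  have hT := hdTM.isMarkedBoundary.adjoint_comp_self_comp_adjoint hα.tsum_snd
  have hO := hdOM.isMarkedBoundary.adjoint_comp_self_comp_adjoint hα
  exact LinearMap.range_inf_range_eq_bot_of_not_hasEigenvalue
    (congrArg ContinuousLinearMap.toLinearMap hT) (congrArg ContinuousLinearMap.toLinearMap hO)
    (congrArg ContinuousLinearMap.toLinearMap (hdOM.comp_adjoint_eq_comp_adjoint hdTM)) h₁ h₂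

end GroverStmtB
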